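/- (Bochner-type formula) Let n ≥ 1, let F : ℝⁿ → [0,∞) be a strongly convex Minkowski norm of class C³ on ℝⁿ∖{0}, and set a_{ij}(ξ) = ∂²(½F²)/∂ξ_i∂ξ_j (ξ) and a_{ijk}(ξ) = ∂³(½F²)/∂ξ_i∂ξ_j∂ξ_k (ξ). Let u be a C³ function on an open subset of ℝⁿ and let x be a point with ∇u(x) ≠ 0. Then at x, with all instances of a_{ij}, a_{ijk} and ∂(½F²)/∂ξ_k evaluated at ∇u(x), and writing Qu = Σ_{i,j} a_{ij}(∇u) u_{ij}: Σ_{i,j} a_{ij} ∂²/∂x_i∂x_j (½F²(∇u)) = Σ_{i,j,k,l} a_{ij} a_{kl} u_{ik} u_{jl} + Σ_k ∂(Qu)/∂x_k · ∂(½F²)/∂ξ_k (∇u) − Σ_{i,j,l} a_{ijl} ∂/∂x_l (½F²(∇u)) u_{ij}. -/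

import Mathlib

/-!
Write `Φ = ½F²` and `w = Φ ∘ ∇u`. Near `x` the chain rule gives `∂ᵢw = Σₖ uᵢₖ Φₖ(∇u)`, and
differentiating once more, `∂ⱼ∂ᵢw = Σₖ (uᵢₖⱼ Φₖ + uᵢₖ Σₗ uⱼₗ aₖₗ)`. Likewise
`∂ₖ(Qu) = Σᵢⱼ (Σₗ uₖₗ aᵢⱼₗ uᵢⱼ + aᵢⱼ uᵢⱼₖ)`. Contracting the first with `aᵢⱼ`, the terms with
third derivatives of `u` are exactly those of `Σₖ ∂ₖ(Qu) Φₖ`, and the terms with `aᵢⱼₗ` are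
those of `Σ aᵢⱼₗ ∂ₗw uᵢⱼ`; the bookkeeping only uses the symmetry of second and third
derivatives of `u`.
-/

open Real
open scoped RealInnerProductSpace

noncomputable section

/-- The `i`-th partial derivative of `f : ℝⁿ → ℝ` at `x`. -/
def pd {n : ℕ} (f : EuclideanSpace ℝ (Fin n) → ℝ) (i : Fin n)
    (x : EuclideanSpace ℝ (Fin n)) : ℝ :=
  fderiv ℝ f x (EuclideanSpace.single i 1)

/-- `a_{ij}(ξ) = ∂²(½F²)/∂ξ_i∂ξ_j (ξ)`. -/
def aCoeff {n : ℕ} (F : EuclideanSpace ℝ (Fin n) → ℝ) (i j : Fin n)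
    (ξ : EuclideanSpace ℝ (Fin n)) : ℝ :=
  pd (pd (fun η => F η ^ 2 / 2) i) j ξ

/-- `a_{ijk}(ξ) = ∂³(½F²)/∂ξ_i∂ξ_j∂ξ_k (ξ)`. -/
def aCoeff3 {n : ℕ} (F : EuclideanSpace ℝ (Fin n) → ℝ) (i j k : Fin n)
    (ξ : EuclideanSpace ℝ (Fin n)) : ℝ :=
  pd (pd (pd (fun η => F η ^ 2 / 2) i) j) k ξ

/-- A Minkowski norm on ℝⁿ: nonnegative, convex, even, positively 1-homogeneous,
and positive away from the origin. -/
structure IsMinkowskiNorm {n : ℕ} (F : EuclideanSpace ℝ (Fin n) → ℝ) : Prop where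
  nonneg : ∀ ξ, 0 ≤ F ξ
  convexOn : ConvexOn ℝ Set.univ F
  even : ∀ ξ, F (-ξ) = F ξ
  homog : ∀ (t : ℝ) (ξ : EuclideanSpace ℝ (Fin n)), F (t • ξ) = |t| * F ξ
  pos : ∀ ξ, ξ ≠ 0 → 0 < F ξ

/-- A strongly convex Minkowski norm of class C³: additionally `F` is C³ away from
the origin and the Hessian of `F²` is positive definite away from the origin. -/
structure IsStronglyConvexMinkowskiNormC3 {n : ℕ}
    (F : EuclideanSpace ℝ (Fin n) → ℝ) extends IsMinkowskiNorm F : Prop where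
  contDiff3 : ContDiffOn ℝ 3 F {(0 : EuclideanSpace ℝ (Fin n))}ᶜ
  posDef : ∀ ξ : EuclideanSpace ℝ (Fin n), ξ ≠ 0 →
    ∀ V : EuclideanSpace ℝ (Fin n), V ≠ 0 →
      0 < ∑ i, ∑ j, aCoeff F i j ξ * V i * V j

open Finset
open scoped Topology

variable {n : ℕ}

local notation "ℝ^" n:max => EuclideanSpace ℝ (Fin n)

theorem fderiv_apply_eq_sum_pd (f : ℝ^n → ℝ) (x v : ℝ^n) :
    fderiv ℝ f x v = ∑ k, v k * pd f k x := by
  conv_lhs => rw [← (EuclideanSpace.basisFun (Fin n) ℝ).sum_repr v]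
  simp [map_sum, pd]

theorem gradient_apply_eq_pd (u : ℝ^n → ℝ) (y : ℝ^n) (k : Fin n) :
    gradient u y k = pd u k y := by
  rw [pd, ← inner_gradient_left, EuclideanSpace.inner_single_right]
  simp

theorem pd_congr_of_eventuallyEq {f g : ℝ^n → ℝ} {x : ℝ^n} (h : f =ᶠ[𝓝 x] g) (i : Fin n) :
    pd f i x = pd g i x := by
  rw [pd, pd, h.fderiv_eq]

theorem pd_fun_sum {ι : Type*} {s : Finset ι} {f : ι → ℝ^n → ℝ} {x : ℝ^n}
    (h : ∀ i ∈ s, DifferentiableAt ℝ (f i) x) (j : Fin n) :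
    pd (fun y => ∑ i ∈ s, f i y) j x = ∑ i ∈ s, pd (f i) j x := by
  simp [pd, fderiv_fun_sum h]

theorem pd_fun_mul {f g : ℝ^n → ℝ} {x : ℝ^n} (hf : DifferentiableAt ℝ f x)
    (hg : DifferentiableAt ℝ g x) (j : Fin n) :
    pd (fun y => f y * g y) j x = pd f j x * g x + f x * pd g j x := by
  simp only [pd, fderiv_fun_mul hf hg, add_apply, smul_apply, smul_eq_mul]
  ring

theorem ContDiffAt.pd {f : ℝ^n → ℝ} {x : ℝ^n} {m N : WithTop ℕ∞} (hf : ContDiffAt ℝ N f x)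
    (h : m + 1 ≤ N) (i : Fin n) : ContDiffAt ℝ m (pd f i) x :=
  (hf.fderiv_right h).clm_apply contDiffAt_const

theorem pd_pd_comm {f : ℝ^n → ℝ} {x : ℝ^n} (hf : ContDiffAt ℝ 2 f x) (i j : Fin n) :
    pd (pd f i) j x = pd (pd f j) i x := by
  have hd : DifferentiableAt ℝ (fderiv ℝ f) x :=
    (hf.fderiv_right le_rfl).differentiableAt one_ne_zero
  have hsym := hf.isSymmSndFDerivAt (by simp [minSmoothness_of_isRCLikeNormedField])
  have key (a b : Fin n) : pd (pd f a) b x =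
      fderiv ℝ (fderiv ℝ f) x (EuclideanSpace.single b 1) (EuclideanSpace.single a 1) := by
    unfold pd
    rw [fderiv_clm_apply hd (differentiableAt_const _)]
    simp
  rw [key, key, hsym]

theorem ContDiffAt.differentiableAt_gradient {u : ℝ^n → ℝ} {y : ℝ^n} (hu : ContDiffAt ℝ 2 u y) :
    DifferentiableAt ℝ (gradient u) y :=
  ((InnerProductSpace.toDual ℝ (ℝ^n)).symm.contDiff.contDiffAt.comp y
    (hu.fderiv_right le_rfl)).differentiableAt one_ne_zero

theorem fderiv_gradient_apply {u : ℝ^n → ℝ} {y : ℝ^n} (hu : DifferentiableAt ℝ (gradient u) y)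
    (v : ℝ^n) (k : Fin n) : fderiv ℝ (gradient u) y v k = fderiv ℝ (pd u k) y v := by
  have h : pd u k = EuclideanSpace.proj k ∘ gradient u :=
    funext fun z => (gradient_apply_eq_pd u z k).symm
  rw [h, fderiv_comp y (EuclideanSpace.proj k).differentiableAt hu,
    ContinuousLinearMap.fderiv]
  rfl

theorem pd_comp_gradient {φ u : ℝ^n → ℝ} {y : ℝ^n} (hu : ContDiffAt ℝ 2 u y)
    (hφ : DifferentiableAt ℝ φ (gradient u y)) (i : Fin n) :
    pd (fun z => φ (gradient u z)) i y = ∑ k, pd (pd u i) k y * pd φ k (gradient u y) := by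
  have hg := hu.differentiableAt_gradient
  rw [pd, fderiv_fun_comp y hφ hg, ContinuousLinearMap.comp_apply, fderiv_apply_eq_sum_pd]
  refine sum_congr rfl fun k _ => ?_
  rw [fderiv_gradient_apply hg, ← pd, pd_pd_comm hu]

-- `a`, `b`: second and third derivatives of `Φ`; `H`, `T`: those of `u`; `P`: the gradient of `Φ`.
theorem bochner_algebraic_identity {ι : Type*} [Fintype ι] (a H : ι → ι → ℝ)
    (b T : ι → ι → ι → ℝ) (P : ι → ℝ)
    (hH : ∀ i j, H i j = H j i) (hT : ∀ i j k, T i j k = T i k j) :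
    ∑ i, ∑ j, a i j * ∑ k, (T i k j * P k + H i k * ∑ l, H j l * a k l) =
      (∑ i, ∑ j, ∑ k, ∑ l, a i j * a k l * H i k * H j l) +
        (∑ k, (∑ i, ∑ j, ((∑ l, H k l * b i j l) * H i j + a i j * T i j k)) * P k) -
        ∑ i, ∑ j, ∑ l, b i j l * (∑ k, H l k * P k) * H i j := by
  have hquadratic : ∑ i, ∑ j, a i j * ∑ k, H i k * ∑ l, H j l * a k l =
      ∑ i, ∑ j, ∑ k, ∑ l, a i j * a k l * H i k * H j l := by
    simp only [mul_sum]
    exact sum_congr rfl fun i _ => sum_congr rfl fun j _ => sum_congr rfl fun k _ =>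
      sum_congr rfl fun l _ => by ring
  have hthirdΦ : ∑ k, (∑ i, ∑ j, (∑ l, H k l * b i j l) * H i j) * P k =
      ∑ i, ∑ j, ∑ l, b i j l * (∑ k, H l k * P k) * H i j := by
    simp only [sum_mul, mul_sum]
    rw [sum_comm]
    refine sum_congr rfl fun i _ => ?_
    rw [sum_comm]
    refine sum_congr rfl fun j _ => ?_
    rw [sum_comm]
    exact sum_congr rfl fun l _ => sum_congr rfl fun k _ => by rw [hH]; ring
  have hthirdU :
      ∑ i, ∑ j, a i j * ∑ k, T i k j * P k = ∑ k, (∑ i, ∑ j, a i j * T i j k) * P k := by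
    simp only [sum_mul, mul_sum]
    conv_rhs => rw [sum_comm]; enter [2, i]; rw [sum_comm]
    exact sum_congr rfl fun i _ => sum_congr rfl fun j _ => sum_congr rfl fun k _ => by
      rw [hT]; ring
  simp only [mul_add, add_mul, sum_add_distrib] at *
  linarith

-- For `Φ = ½F²` this is the Finsler–Laplacian `Q u`.
def finslerLaplacian (Φ u : ℝ^n → ℝ) (y : ℝ^n) : ℝ :=
  ∑ i, ∑ j, pd (pd Φ i) j (gradient u y) * pd (pd u i) j y

section Bochner

variable {Φ u : ℝ^n → ℝ} {x : ℝ^n}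

theorem pd_pd_comp_gradient (hu : ContDiffAt ℝ 3 u x) (hΦ : ContDiffAt ℝ 2 Φ (gradient u x))
    (i j : Fin n) :
    pd (pd (fun y => Φ (gradient u y)) i) j x =
      ∑ k, (pd (pd (pd u i) k) j x * pd Φ k (gradient u x) +
        pd (pd u i) k x * ∑ l, pd (pd u j) l x * pd (pd Φ k) l (gradient u x)) := by
  have hu2 : ContDiffAt ℝ 2 u x := hu.of_le (by norm_num)
  have hg := hu2.differentiableAt_gradient
  have hfirst : pd (fun y => Φ (gradient u y)) i =ᶠ[𝓝 x]
      fun y => ∑ k, pd (pd u i) k y * pd Φ k (gradient u y) := by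
    filter_upwards [hu2.eventually (by simp),
      hg.continuousAt.eventually (hΦ.eventually (by simp))] with y huy hΦy
    exact pd_comp_gradient huy (hΦy.differentiableAt two_ne_zero) i
  have hHess (k : Fin n) : DifferentiableAt ℝ (pd (pd u i) k) x :=
    ((hu.pd (m := 2) le_rfl i).pd (m := 1) le_rfl k).differentiableAt one_ne_zero
  have hΦ' (k : Fin n) : DifferentiableAt ℝ (pd Φ k) (gradient u x) :=
    (hΦ.pd (m := 1) le_rfl k).differentiableAt one_ne_zero
  have hΦ'g (k : Fin n) : DifferentiableAt ℝ (fun y => pd Φ k (gradient u y)) x :=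
    (hΦ' k).comp x hg
  rw [pd_congr_of_eventuallyEq hfirst, pd_fun_sum fun k _ => (hHess k).fun_mul (hΦ'g k)]
  refine sum_congr rfl fun k _ => ?_
  rw [pd_fun_mul (hHess k) (hΦ'g k), pd_comp_gradient hu2 (hΦ' k)]

theorem pd_finslerLaplacian (hu : ContDiffAt ℝ 3 u x) (hΦ : ContDiffAt ℝ 3 Φ (gradient u x))
    (k : Fin n) :
    pd (finslerLaplacian Φ u) k x =
      ∑ i, ∑ j, ((∑ l, pd (pd u k) l x * pd (pd (pd Φ i) j) l (gradient u x)) * pd (pd u i) j x +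
        pd (pd Φ i) j (gradient u x) * pd (pd (pd u i) j) k x) := by
  have hu2 : ContDiffAt ℝ 2 u x := hu.of_le (by norm_num)
  have hg := hu2.differentiableAt_gradient
  have hHess (i j : Fin n) : DifferentiableAt ℝ (pd (pd u i) j) x :=
    ((hu.pd (m := 2) le_rfl i).pd (m := 1) le_rfl j).differentiableAt one_ne_zero
  have hΦ'' (i j : Fin n) : DifferentiableAt ℝ (pd (pd Φ i) j) (gradient u x) :=
    ((hΦ.pd (m := 2) le_rfl i).pd (m := 1) le_rfl j).differentiableAt one_ne_zero
  have hΦ''g (i j : Fin n) : DifferentiableAt ℝ (fun y => pd (pd Φ i) j (gradient u y)) x :=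
    (hΦ'' i j).comp x hg
  have hterm (i j : Fin n) :
      DifferentiableAt ℝ (fun y => pd (pd Φ i) j (gradient u y) * pd (pd u i) j y) x :=
    (hΦ''g i j).mul (hHess i j)
  unfold finslerLaplacian
  rw [pd_fun_sum fun i _ => DifferentiableAt.fun_sum fun j _ => hterm i j]
  refine sum_congr rfl fun i _ => ?_
  rw [pd_fun_sum fun j _ => hterm i j]
  refine sum_congr rfl fun j _ => ?_
  rw [pd_fun_mul (hΦ''g i j) (hHess i j), pd_comp_gradient hu2 (hΦ'' i j)]

theorem bochner_identity (hu : ContDiffAt ℝ 3 u x) (hΦ : ContDiffAt ℝ 3 Φ (gradient u x)) :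
    ∑ i, ∑ j, pd (pd Φ i) j (gradient u x) * pd (pd (fun y => Φ (gradient u y)) i) j x =
      (∑ i, ∑ j, ∑ k, ∑ l, pd (pd Φ i) j (gradient u x) * pd (pd Φ k) l (gradient u x) *
          pd (pd u i) k x * pd (pd u j) l x) +
        (∑ k, pd (finslerLaplacian Φ u) k x * pd Φ k (gradient u x)) -
        ∑ i, ∑ j, ∑ l, pd (pd (pd Φ i) j) l (gradient u x) *
          pd (fun y => Φ (gradient u y)) l x * pd (pd u i) j x := by
  have hu2 : ContDiffAt ℝ 2 u x := hu.of_le (by norm_num)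
  simp only [pd_pd_comp_gradient hu (hΦ.of_le (by norm_num)), pd_finslerLaplacian hu hΦ,
    pd_comp_gradient hu2 (hΦ.differentiableAt (by norm_num))]
  exact bochner_algebraic_identity (fun i j => pd (pd Φ i) j (gradient u x))
    (fun i j => pd (pd u i) j x) (fun i j l => pd (pd (pd Φ i) j) l (gradient u x))
    (fun i j k => pd (pd (pd u i) j) k x) (fun k => pd Φ k (gradient u x)) (pd_pd_comm hu2)
    fun i j k => pd_pd_comm (hu.pd (m := 2) le_rfl i) j k

end Bochner

theorem bochner_formula_general {n : ℕ}
    (F : EuclideanSpace ℝ (Fin n) → ℝ) (hF : IsStronglyConvexMinkowskiNormC3 F)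
    (U : Set (EuclideanSpace ℝ (Fin n))) (hU : IsOpen U)
    (u : EuclideanSpace ℝ (Fin n) → ℝ) (hu : ContDiffOn ℝ 3 u U)
    (x : EuclideanSpace ℝ (Fin n)) (hx : x ∈ U) (hgrad : gradient u x ≠ 0) :
    ∑ i, ∑ j, aCoeff F i j (gradient u x) *
        pd (pd (fun y => F (gradient u y) ^ 2 / 2) i) j x
      = (∑ i, ∑ j, ∑ k, ∑ l, aCoeff F i j (gradient u x) * aCoeff F k l (gradient u x) *
            pd (pd u i) k x * pd (pd u j) l x)
        + (∑ k, pd (fun y => ∑ i, ∑ j, aCoeff F i j (gradient u y) * pd (pd u i) j y) k x *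
            pd (fun η => F η ^ 2 / 2) k (gradient u x))
        - ∑ i, ∑ j, ∑ l, aCoeff3 F i j l (gradient u x) *
            pd (fun y => F (gradient u y) ^ 2 / 2) l x * pd (pd u i) j x := by
  have hΦ : ContDiffAt ℝ 3 (fun η => F η ^ 2 / 2) (gradient u x) :=
    ((hF.contDiff3.pow 2).div_const 2).contDiffAt (isOpen_compl_singleton.mem_nhds hgrad)
  exact bochner_identity ((hu x hx).contDiffAt (hU.mem_nhds hx)) hΦ

/-- Bochner-type formula for the Finsler–Laplacian. -/
theorem bochner_formula {n : ℕ} (hn : 1 ≤ n)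
    (F : EuclideanSpace ℝ (Fin n) → ℝ) (hF : IsStronglyConvexMinkowskiNormC3 F)
    (U : Set (EuclideanSpace ℝ (Fin n))) (hU : IsOpen U)
    (u : EuclideanSpace ℝ (Fin n) → ℝ) (hu : ContDiffOn ℝ 3 u U)
    (x : EuclideanSpace ℝ (Fin n)) (hx : x ∈ U) (hgrad : gradient u x ≠ 0) :
    ∑ i, ∑ j, aCoeff F i j (gradient u x) *
        pd (pd (fun y => F (gradient u y) ^ 2 / 2) i) j x
      = (∑ i, ∑ j, ∑ k, ∑ l, aCoeff F i j (gradient u x) * aCoeff F k l (gradient u x) *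
            pd (pd u i) k x * pd (pd u j) l x)
        + (∑ k, pd (fun y => ∑ i, ∑ j, aCoeff F i j (gradient u y) * pd (pd u i) j y) k x *
            pd (fun η => F η ^ 2 / 2) k (gradient u x))
        - ∑ i, ∑ j, ∑ l, aCoeff3 F i j l (gradient u x) *
            pd (fun y => F (gradient u y) ^ 2 / 2) l x * pd (pd u i) j x :=
  bochner_formula_general F hF U hU u hu x hx hgrad
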